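/- arXiv:1806.09034 — 4 statements merged into one kernel-verified Lean document; each statement's English description precedes it below -/
import Mathlib

section
/- Let n be a squarefree positive integer and y ≥ n^(1/2) a real number. Then Ω(n) = Σ_{p|n, p≤y} (1 - log p / log y) + log n / log y + Σ_{r≥1} χ_r(n), where χ_r(n) = -(log n / log y - 1 - Σ_{i=1}^{r-1} log p_i / log y) if n = p_1⋯p_r with p_1 < ⋯ < p_{r-1} ≤ y < p_r, and χ_r(n) = 0 otherwise. -/
/-! Split the prime factors of `n` into those `≤ y` and those `> y`. Two distinct primes above
`y ≥ √n` would have a product exceeding `n`, so at most one prime factor exceeds `y`. With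
`log n = ∑_{p ∣ n} log p`, the right-hand side collapses to the number of prime factors `≤ y`,
plus `1` for the prime `p > y` when there is one: then `χ_{Ω(n)}(n) = 1 - log p / log y`
cancels the share of `p` in `log n / log y`. -/

open Finset

theorem Squarefree.length_primeFactorsList {n : ℕ} (hsq : Squarefree n) :
    n.primeFactorsList.length = #n.primeFactors := by
  rw [Nat.primeFactors, List.toFinset_card_of_nodup hsq.nodup_primeFactorsList]

theorem Squarefree.log_eq_sum_log_primeFactors {n : ℕ} (hsq : Squarefree n) :
    Real.log n = ∑ p ∈ n.primeFactors, Real.log p := by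
  conv_lhs => rw [← Nat.prod_primeFactors_of_squarefree hsq]
  rw [Nat.cast_prod, Real.log_prod]
  exact fun p hp ↦ Nat.cast_ne_zero.mpr (Nat.prime_of_mem_primeFactors hp).ne_zero

theorem Nat.card_primeFactors_filter_lt_le_one {n : ℕ} (hn : n ≠ 0) {y : ℝ} (hy : √n ≤ y) :
    #(n.primeFactors.filter fun p : ℕ ↦ y < p) ≤ 1 := by
  refine card_le_one.mpr fun p hp q hq ↦ by_contra fun hpq ↦ ?_
  obtain ⟨hpn, hyp⟩ := mem_filter.mp hp
  obtain ⟨hqn, hyq⟩ := mem_filter.mp hq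
  have hdvd : p * q ∣ n :=
    ((Nat.coprime_primes (Nat.prime_of_mem_primeFactors hpn) (Nat.prime_of_mem_primeFactors hqn)).mpr
      hpq).mul_dvd_of_dvd_of_dvd (Nat.dvd_of_mem_primeFactors hpn) (Nat.dvd_of_mem_primeFactors hqn)
  have hlt : (n : ℝ) < p * q := calc
    (n : ℝ) = √n * √n := (Real.mul_self_sqrt n.cast_nonneg).symm
    _ < p * q := _root_.mul_lt_mul'' (hy.trans_lt hyp) (hy.trans_lt hyq) (Real.sqrt_nonneg _)
      (Real.sqrt_nonneg _)
  exact hlt.not_ge (mod_cast Nat.le_of_dvd (Nat.pos_of_ne_zero hn) hdvd)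

theorem stmt_0_general (n : ℕ) (hsq : Squarefree n) (y : ℝ)
    (hy : Real.sqrt n ≤ y) :
    (n.primeFactorsList.length : ℝ) =
      (∑ p ∈ n.primeFactors.filter (fun p : ℕ => (p : ℝ) ≤ y),
        (1 - Real.log p / Real.log y))
      + Real.log n / Real.log y
      + ∑ r ∈ Finset.range (n.primeFactorsList.length + 1),
          (if r = n.primeFactorsList.length ∧
              (n.primeFactors.filter (fun p : ℕ => y < (p : ℝ))).card = 1 then
            -(Real.log n / Real.log y - 1
              - ∑ p ∈ n.primeFactors.filter (fun p : ℕ => (p : ℝ) ≤ y),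
                  Real.log p / Real.log y)
          else 0) := by
  set A := n.primeFactors.filter (fun p : ℕ => (p : ℝ) ≤ y)
  set B := n.primeFactors.filter (fun p : ℕ => y < (p : ℝ))
  have hsplit (f : ℕ → ℝ) : ∑ p ∈ n.primeFactors, f p = ∑ p ∈ A, f p + ∑ p ∈ B, f p := by
    simp only [A, B, ← not_le, sum_filter_add_sum_filter_not]
  have hΩ : (n.primeFactorsList.length : ℝ) = #A + #B := by
    simpa [hsq.length_primeFactorsList] using hsplit 1
  have hlog : Real.log n / Real.log y =
      ∑ p ∈ A, Real.log p / Real.log y + ∑ p ∈ B, Real.log p / Real.log y := by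
    rw [hsq.log_eq_sum_log_primeFactors, sum_div, hsplit]
  simp only [ite_and, sum_ite_eq', mem_range, Nat.lt_succ_self, if_true]
  rw [hΩ, hlog, sum_sub_distrib, sum_const, nsmul_one]
  have hB : #B ≤ 1 := Nat.card_primeFactors_filter_lt_le_one hsq.ne_zero hy
  rcases Nat.le_one_iff_eq_zero_or_eq_one.mp hB with hB0 | hB1
  · simp [card_eq_zero.mp hB0]
  · rw [if_pos hB1, hB1]
    ring

/-- Identity (1.8): for squarefree `n` and `y ≥ √n`,
`Ω(n) = Σ_{p|n, p≤y} (1 - log p / log y) + log n / log y + Σ_{r≥1} χ_r(n)`,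
where `χ_r(n)` is nonzero only when `n = p₁⋯p_r` with `p₁ < ⋯ < p_{r-1} ≤ y < p_r`
(for squarefree `n` this means `r = Ω(n)` and exactly one prime factor of `n`
exceeds `y`), in which case
`χ_r(n) = -(log n / log y - 1 - Σ_{i=1}^{r-1} log p_i / log y)`. -/
theorem stmt_0 (n : ℕ) (hn : 0 < n) (hsq : Squarefree n) (y : ℝ)
    (hy : Real.sqrt n ≤ y) :
    (n.primeFactorsList.length : ℝ) =
      (∑ p ∈ n.primeFactors.filter (fun p : ℕ => (p : ℝ) ≤ y),
        (1 - Real.log p / Real.log y))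
      + Real.log n / Real.log y
      + ∑ r ∈ Finset.range (n.primeFactorsList.length + 1),
          (if r = n.primeFactorsList.length ∧
              (n.primeFactors.filter (fun p : ℕ => y < (p : ℝ))).card = 1 then
            -(Real.log n / Real.log y - 1
              - ∑ p ∈ n.primeFactors.filter (fun p : ℕ => (p : ℝ) ≤ y),
                  Real.log p / Real.log y)
          else 0) :=
  stmt_0_general n hsq y hy
end

section
/- For squarefree positive integers d and e, 1/φ(lcm(d,e)) = (1/(φ(d)φ(e))) · Σ_{u | gcd(d,e)} ψ(u), where ψ is the completely multiplicative function with ψ(p) = p - 2 for all primes p. -/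
/-!
For squarefree `n`, the multiplicative `ψ` has `Σ_{u ∣ n} ψ u = ∏_{p ∣ n} (1 + (p - 2)) = φ n`.
With `n = gcd d e` the claim becomes `φ (lcm d e) * φ (gcd d e) = φ d * φ e`, which holds for
every multiplicative function since `lcm` and `gcd` take the max and min of prime exponents.
-/

open Nat ArithmeticFunction Finset

theorem Nat.totient_lcm_mul_totient_gcd (a b : ℕ) :
    φ (a.lcm b) * φ (a.gcd b) = φ a * φ b :=
  IsMultiplicative.lcm_apply_mul_gcd_apply (f := ⟨φ, totient_zero⟩) ⟨totient_one, totient_mul⟩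

theorem Nat.totient_eq_prod_primeFactors_sub_one {n : ℕ} (hn : Squarefree n) :
    φ n = ∏ p ∈ n.primeFactors, (p - 1) := by
  rw [totient_eq_div_primeFactors_mul, prod_primeFactors_of_squarefree hn,
    Nat.div_self (Nat.pos_of_ne_zero hn.ne_zero), one_mul]

theorem ArithmeticFunction.IsMultiplicative.sum_divisors_eq_totient {R : Type*} [CommRing R]
    {f : ArithmeticFunction R} (hf : f.IsMultiplicative)
    (hfp : ∀ p : ℕ, p.Prime → f p = (p : R) - 2) {n : ℕ} (hn : Squarefree n) :
    ∑ d ∈ n.divisors, f d = φ n := by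
  rw [← hf.prodPrimeFactors_one_add_of_squarefree hn, totient_eq_prod_primeFactors_sub_one hn,
    Nat.cast_prod]
  refine prod_congr rfl fun p hp => ?_
  have hp := prime_of_mem_primeFactors hp
  rw [hfp p hp, Nat.cast_sub hp.one_le]
  ring

theorem stmt_4_general (ψ : ℕ → ℝ) (hψ1 : ψ 1 = 1)
    (hψmul : ∀ m n : ℕ, ψ (m * n) = ψ m * ψ n)
    (hψp : ∀ p : ℕ, p.Prime → ψ p = (p : ℝ) - 2)
    (d e : ℕ) (hd : Squarefree d) :
    (1 : ℝ) / ((Nat.lcm d e).totient : ℝ) =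
      (1 / ((d.totient : ℝ) * (e.totient : ℝ))) *
        ∑ u ∈ (Nat.gcd d e).divisors, ψ u := by
  have hψ0 : ψ 0 = 0 := by simpa [hψp 2 prime_two] using hψmul 0 2
  let F : ArithmeticFunction ℝ := ⟨ψ, hψ0⟩
  have hF : F.IsMultiplicative := ⟨hψ1, fun _ => hψmul _ _⟩
  have hg : Squarefree (d.gcd e) := hd.squarefree_of_dvd (Nat.gcd_dvd_left d e)
  have hlcm_gcd : (φ (d.lcm e) : ℝ) * φ (d.gcd e) = φ d * φ e := by
    exact_mod_cast totient_lcm_mul_totient_gcd d e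
  have hg0 : (φ (d.gcd e) : ℝ) ≠ 0 := by
    exact_mod_cast (totient_pos.mpr (Nat.pos_of_ne_zero hg.ne_zero)).ne'
  have hsum : ∑ u ∈ (d.gcd e).divisors, ψ u = φ (d.gcd e) :=
    hF.sum_divisors_eq_totient hψp hg
  rw [hsum, ← hlcm_gcd]
  field_simp

/-- For squarefree positive integers `d`, `e`:
`1/φ(lcm(d,e)) = (1/(φ(d)φ(e))) · Σ_{u ∣ gcd(d,e)} ψ(u)`, where `ψ` is the
completely multiplicative function with `ψ(p) = p - 2` for all primes `p`. -/
theorem stmt_4 (ψ : ℕ → ℝ) (hψ1 : ψ 1 = 1)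
    (hψmul : ∀ m n : ℕ, ψ (m * n) = ψ m * ψ n)
    (hψp : ∀ p : ℕ, p.Prime → ψ p = (p : ℝ) - 2)
    (d e : ℕ) (hd : Squarefree d) (he : Squarefree e) (hd0 : 0 < d) (he0 : 0 < e) :
    (1 : ℝ) / ((Nat.lcm d e).totient : ℝ) =
      (1 / ((d.totient : ℝ) * (e.totient : ℝ))) *
        ∑ u ∈ (Nat.gcd d e).divisors, ψ u :=
  stmt_4_general ψ hψ1 hψmul hψp d e hd
end

section
/- Let k ≥ 3 and let f : ℝ → ℝ be continuous. Define R'_k = {(t_1,…,t_k) ∈ [0,1]^k : for every j, Σ_{i≠j} t_i ≤ 1} and R_{k-1} = {(t_2,…,t_k) ∈ [0,1]^{k-1} : Σ t_i ≤ 1}. Then ∫_{R'_k} f(t_1+⋯+t_k)^2 dt_1⋯dt_k = (1/(k-3)!)·∫_0^1 ∫_0^t ∫_t^{1+s/(k-1)} f(x)^2 (t-s)^{k-3} dx ds dt. -/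
set_option maxHeartbeats 1000000

open MeasureTheory


lemma simplex_meas (n : ℕ) (a : ℝ) :
    MeasurableSet {w : Fin n → ℝ | (∀ i, 0 ≤ w i) ∧ ∑ i, w i ≤ a} := by
  have h1 : {w : Fin n → ℝ | (∀ i, 0 ≤ w i) ∧ ∑ i, w i ≤ a}
      = (⋂ i, {w : Fin n → ℝ | 0 ≤ w i}) ∩ {w | ∑ i, w i ≤ a} := by
    ext w; simp [Set.mem_iInter]
  rw [h1]
  exact (MeasurableSet.iInter fun i =>
      measurableSet_le measurable_const (measurable_pi_apply i)).inter
    (measurableSet_le (Finset.measurable_sum _ fun i _ => measurable_pi_apply i)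
      measurable_const)

lemma simplex_vol : ∀ (n : ℕ) (a : ℝ), 0 ≤ a →
    volume {w : Fin n → ℝ | (∀ i, 0 ≤ w i) ∧ ∑ i, w i ≤ a}
      = ENNReal.ofReal (a ^ n / n.factorial) := by
  intro n
  induction n with
  | zero =>
    intro a ha
    have : {w : Fin 0 → ℝ | (∀ i, 0 ≤ w i) ∧ ∑ i, w i ≤ a} = Set.univ := by
      ext w; simp [ha]
    rw [this]
    simp [volume_pi, Measure.pi_univ]
  | succ n ih =>
    intro a ha
    set e := MeasurableEquiv.piFinSuccAbove (fun _ : Fin (n+1) => ℝ) 0 with he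
    have hmp := measurePreserving_piFinSuccAbove (fun _ : Fin (n+1) => (volume : Measure ℝ)) 0
    set T : Set (ℝ × (Fin n → ℝ)) :=
      {p | 0 ≤ p.1 ∧ (∀ i, 0 ≤ p.2 i) ∧ p.1 + ∑ i, p.2 i ≤ a} with hT
    have hTmeas : MeasurableSet T := by
      have h1 : T = {p : ℝ × (Fin n → ℝ) | 0 ≤ p.1} ∩
          ((⋂ i, {p : ℝ × (Fin n → ℝ) | 0 ≤ p.2 i}) ∩ {p | p.1 + ∑ i, p.2 i ≤ a}) := by
        ext p; simp [hT, Set.mem_iInter]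
      rw [h1]
      refine (measurableSet_le measurable_const measurable_fst).inter
        ((MeasurableSet.iInter fun i => measurableSet_le measurable_const
          ((measurable_pi_apply i).comp measurable_snd)).inter
          (measurableSet_le (measurable_fst.add
            (Finset.measurable_sum _ fun i _ => (measurable_pi_apply i).comp measurable_snd))
            measurable_const))
    have hpre : e ⁻¹' T = {w : Fin (n+1) → ℝ | (∀ i, 0 ≤ w i) ∧ ∑ i, w i ≤ a} := by
      ext w
      simp only [Set.mem_preimage, Set.mem_setOf_eq, hT, he,
        MeasurableEquiv.piFinSuccAbove_apply, Fin.forall_fin_succ, Fin.sum_univ_succ,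
        Fin.succAbove_zero]
      tauto
    rw [← hpre]
    have hvol : volume (e ⁻¹' T) = (volume.prod volume) T := by
      rw [volume_pi, hmp.measure_preimage hTmeas.nullMeasurableSet, ← volume_pi]
    rw [hvol, Measure.prod_apply hTmeas]
    have hslice : ∀ y : ℝ, volume (Prod.mk y ⁻¹' T)
        = Set.indicator (Set.Icc 0 a) (fun y => ENNReal.ofReal ((a-y)^n / n.factorial)) y := by
      intro y
      by_cases hy : y ∈ Set.Icc 0 a
      · rw [Set.indicator_of_mem hy]
        have : Prod.mk y ⁻¹' T = {w : Fin n → ℝ | (∀ i, 0 ≤ w i) ∧ ∑ i, w i ≤ a - y} := by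
          ext w
          simp only [Set.mem_preimage, Set.mem_setOf_eq, hT]
          constructor
          · rintro ⟨_, h2, h3⟩; exact ⟨h2, by linarith⟩
          · rintro ⟨h2, h3⟩; exact ⟨hy.1, h2, by linarith⟩
        rw [this, ih (a - y) (by linarith [hy.2])]
      · rw [Set.indicator_of_notMem hy]
        have : Prod.mk y ⁻¹' T = ∅ := by
          ext w
          simp only [Set.mem_preimage, Set.mem_setOf_eq, hT, Set.mem_empty_iff_false, iff_false]
          rintro ⟨h1, h2, h3⟩
          have hs : (0:ℝ) ≤ ∑ i, w i := Finset.sum_nonneg fun i _ => h2 i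
          simp only [Set.mem_Icc, not_and, not_le] at hy
          have := hy h1
          linarith
        rw [this, measure_empty]
    simp_rw [hslice]
    rw [lintegral_indicator measurableSet_Icc]
    rw [← ofReal_integral_eq_lintegral_ofReal]
    · rw [MeasureTheory.integral_Icc_eq_integral_Ioc,
        ← intervalIntegral.integral_of_le ha]
      have : ∫ y in (0:ℝ)..a, (a - y)^n / n.factorial
          = (∫ y in (0:ℝ)..a, (a - y)^n) / n.factorial := by
        rw [intervalIntegral.integral_div]
      rw [this]
      have h2 : ∫ y in (0:ℝ)..a, (a - y)^n = ∫ x in (a-a)..(a-0), x^n :=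
        intervalIntegral.integral_comp_sub_left (fun x => x^n) a
      rw [h2]
      simp only [sub_self, sub_zero]
      rw [integral_pow]
      have hfac : ((n+1).factorial : ℝ) = (n+1) * n.factorial := by
        rw [Nat.factorial_succ]; push_cast; ring
      rw [hfac]
      have h3 : ((n:ℝ)+1) ≠ 0 := by positivity
      have h4 : (n.factorial : ℝ) ≠ 0 := Nat.cast_ne_zero.mpr n.factorial_ne_zero
      field_simp
      simp
    · exact Continuous.integrableOn_Icc (by continuity)
    · exact ae_restrict_of_forall_mem measurableSet_Icc fun y hy => by
        have : 0 ≤ a - y := by linarith [hy.2]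
        positivity


-- ae-eq of a set squeezed between Ioo and Icc with Ioc
lemma ae_eq_Ioc_between {S : Set ℝ} {l u : ℝ} (h1 : Set.Ioo l u ⊆ S) (h2 : S ⊆ Set.Icc l u) :
    S =ᵐ[volume] Set.Ioc l u := by
  have hsub : (S \ Set.Ioc l u) ∪ (Set.Ioc l u \ S) ⊆ ({l, u} : Set ℝ) := by
    intro x hx
    rcases hx with hx | hx
    · have hxI := h2 hx.1
      have : x ∉ Set.Ioo l u ∨ x = u := by
        by_cases h : x = u
        · right; exact h
        · left; intro hio; exact hx.2 ⟨hio.1, hxI.2⟩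
      rcases this with h | h
      · simp only [Set.mem_Ioo, not_and, not_lt] at h
        rcases lt_or_eq_of_le hxI.1 with h' | h'
        · have := h h'
          have : x = u := le_antisymm hxI.2 this
          simp [this]
        · simp [← h']
      · simp [h]
    · have hio : x ∈ Set.Ioc l u := hx.1
      by_cases h : x = u
      · simp [h]
      · exfalso; exact hx.2 (h1 ⟨hio.1, lt_of_le_of_ne hio.2 h⟩)
  have hnull : volume ((S \ Set.Ioc l u) ∪ (Set.Ioc l u \ S)) = 0 := by
    refine measure_mono_null hsub ?_
    exact Set.Countable.measure_zero (Set.Countable.insert l (Set.countable_singleton u)) _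
  have h1' : volume (S \ Set.Ioc l u) = 0 :=
    measure_mono_null Set.subset_union_left hnull
  have h2' : volume (Set.Ioc l u \ S) = 0 :=
    measure_mono_null Set.subset_union_right hnull
  exact MeasureTheory.ae_eq_set.2 ⟨h1', h2'⟩

lemma integral_tsub_pow (m : ℕ) (s0 t : ℝ) :
    ∫ s in s0..t, (t - s)^m = (t - s0)^(m+1)/(m+1) := by
  have h := intervalIntegral.integral_comp_sub_left (a := s0) (b := t) (fun x => x^m) t
  rw [h, integral_pow, sub_self]
  simp

lemma simplex_empty (n : ℕ) (hn : 0 < n) (a : ℝ) (ha : a < 0) :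
    {w : Fin n → ℝ | (∀ i, 0 ≤ w i) ∧ ∑ i, w i ≤ a} = ∅ := by
  ext w
  simp only [Set.mem_setOf_eq, Set.mem_empty_iff_false, iff_false]
  rintro ⟨h1, h2⟩
  have : (0:ℝ) ≤ ∑ i, w i := Finset.sum_nonneg fun i _ => h1 i
  linarith

lemma shifted_simplex_vol (n : ℕ) (a b : ℝ) :
    volume {w : Fin n → ℝ | (∀ i, b ≤ w i) ∧ ∑ i, w i ≤ a}
      = volume {w : Fin n → ℝ | (∀ i, 0 ≤ w i) ∧ ∑ i, w i ≤ a - n * b} := by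
  have hset : {w : Fin n → ℝ | (∀ i, b ≤ w i) ∧ ∑ i, w i ≤ a}
      = (fun w => w + (fun _ => -b)) ⁻¹'
        {w : Fin n → ℝ | (∀ i, 0 ≤ w i) ∧ ∑ i, w i ≤ a - n * b} := by
    ext w
    simp only [Set.mem_preimage, Set.mem_setOf_eq, Pi.add_apply]
    constructor
    · rintro ⟨h1, h2⟩
      refine ⟨fun i => by linarith [h1 i], ?_⟩
      rw [Finset.sum_add_distrib, Finset.sum_const]
      simp only [Finset.card_univ, Fintype.card_fin, nsmul_eq_mul]
      linarith
    · rintro ⟨h1, h2⟩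
      rw [Finset.sum_add_distrib, Finset.sum_const] at h2
      simp only [Finset.card_univ, Fintype.card_fin, nsmul_eq_mul] at h2
      exact ⟨fun i => by linarith [h1 i], by linarith⟩
  rw [hset, measure_preimage_add_right]


def SxSet (n : ℕ) (x : ℝ) : Set (Fin n → ℝ) :=
  {w | (∀ i, 0 ≤ w i) ∧ ∑ i, w i ≤ 1 ∧ ∑ i, w i ≤ x ∧ ∀ i, x ≤ 1 + w i}

lemma SxSet_meas (n : ℕ) (x : ℝ) : MeasurableSet (SxSet n x) := by
  have h1 : SxSet n x = (⋂ i, {w : Fin n → ℝ | 0 ≤ w i}) ∩ ({w | ∑ i, w i ≤ 1}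
      ∩ ({w | ∑ i, w i ≤ x} ∩ ⋂ i, {w : Fin n → ℝ | x ≤ 1 + w i})) := by
    ext w; simp [SxSet, Set.mem_iInter]
  rw [h1]
  have hsum : Measurable fun w : Fin n → ℝ => ∑ i, w i :=
    Finset.measurable_sum _ fun i _ => measurable_pi_apply i
  exact (MeasurableSet.iInter fun i =>
      measurableSet_le measurable_const (measurable_pi_apply i)).inter
    ((measurableSet_le hsum measurable_const).inter
      ((measurableSet_le hsum measurable_const).inter
        (MeasurableSet.iInter fun i => measurableSet_le measurable_const
          (measurable_const.add (measurable_pi_apply i)))))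


lemma SxSet_vol (n : ℕ) (hn : 0 < n) (x : ℝ) :
    volume (SxSet n x)
      = ENNReal.ofReal ((max (min 1 x - max 0 ((n:ℝ)*(x-1))) 0)^n / n.factorial) := by
  rcases lt_or_ge x 0 with hx | hx
  · have hempty : SxSet n x = ∅ := by
      ext w
      simp only [SxSet, Set.mem_setOf_eq, Set.mem_empty_iff_false, iff_false]
      rintro ⟨h1, _, h3, _⟩
      have : (0:ℝ) ≤ ∑ i, w i := Finset.sum_nonneg fun i _ => h1 i
      linarith
    have hmax : max (min 1 x - max 0 ((n:ℝ)*(x-1))) 0 = 0 := by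
      have h1 : min 1 x = x := min_eq_right (by linarith)
      have h2 : (0:ℝ) ≤ max 0 ((n:ℝ)*(x-1)) := le_max_left _ _
      rw [h1]
      exact max_eq_right (by linarith)
    rw [hempty, hmax, measure_empty, zero_pow hn.ne', zero_div, ENNReal.ofReal_zero]
  rcases le_or_gt x 1 with hx1 | hx1
  · have hset : SxSet n x = {w : Fin n → ℝ | (∀ i, 0 ≤ w i) ∧ ∑ i, w i ≤ x} := by
      ext w
      simp only [SxSet, Set.mem_setOf_eq]
      constructor
      · rintro ⟨h1, _, h3, _⟩; exact ⟨h1, h3⟩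
      · rintro ⟨h1, h2⟩
        exact ⟨h1, by linarith, h2, fun i => by linarith [h1 i]⟩
    have hmax : max (min 1 x - max 0 ((n:ℝ)*(x-1))) 0 = x := by
      have h1 : min 1 x = x := min_eq_right hx1
      have h2 : max 0 ((n:ℝ)*(x-1)) = 0 := max_eq_left (by nlinarith [Nat.cast_nonneg (α := ℝ) n])
      rw [h1, h2, sub_zero]
      exact max_eq_left hx
    rw [hset, hmax, simplex_vol n x hx]
  · have hset : SxSet n x = {w : Fin n → ℝ | (∀ i, x - 1 ≤ w i) ∧ ∑ i, w i ≤ 1} := by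
      ext w
      simp only [SxSet, Set.mem_setOf_eq]
      constructor
      · rintro ⟨_, h2, _, h4⟩; exact ⟨fun i => by linarith [h4 i], h2⟩
      · rintro ⟨h1, h2⟩
        exact ⟨fun i => by linarith [h1 i], h2, by linarith, fun i => by linarith [h1 i]⟩
    rw [hset, shifted_simplex_vol n 1 (x-1)]
    have hmm : max 0 ((n:ℝ)*(x-1)) = (n:ℝ)*(x-1) := by
      refine max_eq_right ?_
      have : (0:ℝ) < x - 1 := by linarith
      positivity
    have h1 : min 1 x = 1 := min_eq_left (by linarith)
    rcases le_or_gt ((n:ℝ)*(x-1)) 1 with h2 | h2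
    · rw [simplex_vol n (1 - (n:ℝ)*(x-1)) (sub_nonneg.mpr h2)]
      have hm : max (1 - (n:ℝ)*(x-1)) 0 = 1 - (n:ℝ)*(x-1) := max_eq_left (by linarith)
      rw [h1, hmm, hm]
    · rw [simplex_empty n hn (1 - (n:ℝ)*(x-1)) (sub_neg.mpr h2), measure_empty]
      rw [h1, hmm]
      have : max (1 - (n:ℝ)*(x-1)) 0 = 0 := max_eq_right (by linarith)
      rw [this, zero_pow hn.ne', zero_div, ENNReal.ofReal_zero]

lemma LHS_red (m : ℕ) (g : ℝ → ℝ) (hg : Continuous g) :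
    ∫ v in {v : Fin (m+3) → ℝ | (∀ i, 0 ≤ v i) ∧ ∀ j, (∑ i, v i) - v j ≤ 1}, g (∑ i, v i)
      = ∫ x : ℝ, (volume (SxSet (m+2) x)).toReal * g x := by
  set B : Set (Fin (m+3) → ℝ) := {v | (∀ i, 0 ≤ v i) ∧ ∀ j, (∑ i, v i) - v j ≤ 1} with hB
  have hsummeas : ∀ (r : ℕ), Measurable fun w : Fin r → ℝ => ∑ i, w i :=
    fun r => Finset.measurable_sum _ fun i _ => measurable_pi_apply i
  have hBmeas : MeasurableSet B := by
    have h1 : B = (⋂ i, {v : Fin (m+3) → ℝ | 0 ≤ v i})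
        ∩ ⋂ j, {v : Fin (m+3) → ℝ | (∑ i, v i) - v j ≤ 1} := by
      ext v; simp [hB, Set.mem_iInter]
    rw [h1]
    exact (MeasurableSet.iInter fun i =>
        measurableSet_le measurable_const (measurable_pi_apply i)).inter
      (MeasurableSet.iInter fun j => measurableSet_le
        ((hsummeas _).sub (measurable_pi_apply j)) measurable_const)
  set e := MeasurableEquiv.piFinSuccAbove (fun _ : Fin (m+2+1) => ℝ) 0 with he
  have hmp : MeasurePreserving e volume volume :=
    volume_preserving_piFinSuccAbove (fun _ : Fin (m+2+1) => ℝ) 0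
  set C : Set (ℝ × (Fin (m+2) → ℝ)) :=
    {p | (0 ≤ p.1 ∧ ∀ i, 0 ≤ p.2 i) ∧
      ((p.1 + ∑ i, p.2 i) - p.1 ≤ 1 ∧ ∀ j, (p.1 + ∑ i, p.2 i) - p.2 j ≤ 1)} with hC
  have hCmeas : MeasurableSet C := by
    have h1 : C = ({p : ℝ × (Fin (m+2) → ℝ) | 0 ≤ p.1}
        ∩ ⋂ i, {p : ℝ × (Fin (m+2) → ℝ) | 0 ≤ p.2 i})
        ∩ ({p : ℝ × (Fin (m+2) → ℝ) | (p.1 + ∑ i, p.2 i) - p.1 ≤ 1}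
          ∩ ⋂ j, {p : ℝ × (Fin (m+2) → ℝ) | (p.1 + ∑ i, p.2 i) - p.2 j ≤ 1}) := by
      ext p; simp [hC, Set.mem_iInter]
    rw [h1]
    have hsm : Measurable fun p : ℝ × (Fin (m+2) → ℝ) => p.1 + ∑ i, p.2 i :=
      measurable_fst.add ((hsummeas _).comp measurable_snd)
    exact ((measurableSet_le measurable_const measurable_fst).inter
        (MeasurableSet.iInter fun i => measurableSet_le measurable_const
          ((measurable_pi_apply i).comp measurable_snd))).inter
      ((measurableSet_le (hsm.sub measurable_fst) measurable_const).inter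
        (MeasurableSet.iInter fun j => measurableSet_le
          (hsm.sub ((measurable_pi_apply j).comp measurable_snd)) measurable_const))
  -- pointwise identification
  have hpoint : ∀ p : ℝ × (Fin (m+2) → ℝ),
      B.indicator (fun v => g (∑ i, v i)) (e.symm p)
        = C.indicator (fun p => g (p.1 + ∑ i, p.2 i)) p := by
    intro p
    have hv : e.symm p = Fin.insertNth 0 p.1 p.2 := by
      simp [he, MeasurableEquiv.piFinSuccAbove_symm_apply, Fin.insertNthEquiv]
    have hsum : ∑ i, (e.symm p) i = p.1 + ∑ i, p.2 i := by
      rw [hv, Fin.sum_univ_succAbove _ 0]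
      simp [Fin.insertNth_apply_same, Fin.insertNth_apply_succAbove]
    have hmem : e.symm p ∈ B ↔ p ∈ C := by
      rw [hB, hC]
      simp only [Set.mem_setOf_eq, hsum]
      constructor
      · rintro ⟨h1, h2⟩
        refine ⟨⟨?_, fun i => ?_⟩, ?_, fun j => ?_⟩
        · have := h1 0; rwa [hv, Fin.insertNth_apply_same] at this
        · have := h1 (Fin.succAbove 0 i); rwa [hv, Fin.insertNth_apply_succAbove] at this
        · have := h2 0; rwa [hv, Fin.insertNth_apply_same] at this
        · have := h2 (Fin.succAbove 0 j); rwa [hv, Fin.insertNth_apply_succAbove] at this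
      · rintro ⟨⟨h1, h2⟩, h3, h4⟩
        constructor
        · rw [Fin.forall_iff_succAbove (0 : Fin (m+2+1))]
          refine ⟨?_, fun i => ?_⟩
          · rw [hv, Fin.insertNth_apply_same]; exact h1
          · rw [hv, Fin.insertNth_apply_succAbove]; exact h2 i
        · rw [Fin.forall_iff_succAbove (0 : Fin (m+2+1))]
          refine ⟨?_, fun j => ?_⟩
          · rw [hv, Fin.insertNth_apply_same]; exact h3
          · rw [hv, Fin.insertNth_apply_succAbove]; exact h4 j
    simp only [Set.indicator_apply]
    rw [if_congr hmem rfl rfl, hsum]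
  -- integrability of C-indicator
  have hCint : Integrable (C.indicator (fun p => g (p.1 + ∑ i, p.2 i)))
      (volume : Measure (ℝ × (Fin (m+2) → ℝ))) := by
    rw [integrable_indicator_iff hCmeas]
    have hsub : C ⊆ (Set.Icc (0:ℝ) 1) ×ˢ (Set.Icc (0 : Fin (m+2) → ℝ) 1) := by
      rintro p ⟨⟨h1, h2⟩, h3, h4⟩
      have hsumle : ∑ i, p.2 i ≤ 1 := by linarith
      have hj : ∀ j, p.2 j ≤ ∑ i, p.2 i := fun j =>
        Finset.single_le_sum (fun i _ => h2 i) (Finset.mem_univ j)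
      constructor
      · exact ⟨h1, by linarith [h4 0, hj 0]⟩
      · rw [Set.mem_Icc]
        constructor
        · intro i; exact h2 i
        · intro i; exact le_trans (hj i) hsumle
    refine IntegrableOn.mono_set ?_ hsub
    refine ContinuousOn.integrableOn_compact (isCompact_Icc.prod isCompact_Icc) ?_
    exact (hg.comp (continuous_fst.add (by
      exact continuous_finset_sum _ fun i _ => (continuous_apply i).comp continuous_snd))).continuousOn
  calc ∫ v in B, g (∑ i, v i)
      = ∫ v, B.indicator (fun v => g (∑ i, v i)) v := (integral_indicator hBmeas).symm
    _ = ∫ p : ℝ × (Fin (m+2) → ℝ), B.indicator (fun v => g (∑ i, v i)) (e.symm p) := by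
        exact ((hmp.symm e).integral_comp e.symm.measurableEmbedding _).symm
    _ = ∫ p : ℝ × (Fin (m+2) → ℝ), C.indicator (fun p => g (p.1 + ∑ i, p.2 i)) p := by
        exact integral_congr_ae (Filter.Eventually.of_forall hpoint)
    _ = ∫ w : Fin (m+2) → ℝ, ∫ y : ℝ, C.indicator (fun p => g (p.1 + ∑ i, p.2 i)) (y, w) := by
        exact integral_prod_symm _ hCint
    _ = ∫ w : Fin (m+2) → ℝ, ∫ x : ℝ, (SxSet (m+2) x).indicator (fun _ => g x) w := by
        refine integral_congr_ae (Filter.Eventually.of_forall fun w => ?_)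
        dsimp only
        have hfun : (fun y : ℝ => C.indicator (fun p => g (p.1 + ∑ i, p.2 i)) (y, w))
            = fun y : ℝ => (fun x : ℝ => (SxSet (m+2) x).indicator (fun _ => g x) w)
                (y + ∑ i, w i) := by
          funext y
          simp only [Set.indicator_apply, hC, SxSet, Set.mem_setOf_eq]
          have hiff : ((0 ≤ y ∧ ∀ i, 0 ≤ w i) ∧
              ((y + ∑ i, w i) - y ≤ 1 ∧ ∀ j, (y + ∑ i, w i) - w j ≤ 1))
              ↔ ((∀ i, 0 ≤ w i) ∧ ∑ i, w i ≤ 1 ∧ ∑ i, w i ≤ y + ∑ i, w i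
                  ∧ ∀ i, y + ∑ i, w i ≤ 1 + w i) := by
            constructor
            · rintro ⟨⟨h1, h2⟩, h3, h4⟩
              exact ⟨h2, by linarith, by linarith, fun i => by linarith [h4 i]⟩
            · rintro ⟨h1, h2, h3, h4⟩
              exact ⟨⟨by linarith, h1⟩, by linarith, fun j => by linarith [h4 j]⟩
          rw [if_congr hiff rfl rfl]
        rw [hfun]
        exact integral_add_right_eq_self (fun x : ℝ => (SxSet (m+2) x).indicator (fun _ => g x) w) (∑ i, w i)
    _ = ∫ x : ℝ, ∫ w : Fin (m+2) → ℝ, (SxSet (m+2) x).indicator (fun _ => g x) w := by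
        refine integral_integral_swap ?_
        have hD : MeasurableSet {q : (Fin (m+2) → ℝ) × ℝ | q.1 ∈ SxSet (m+2) q.2} := by
          have h1 : {q : (Fin (m+2) → ℝ) × ℝ | q.1 ∈ SxSet (m+2) q.2}
              = (⋂ i, {q : (Fin (m+2) → ℝ) × ℝ | 0 ≤ q.1 i})
                ∩ ({q : (Fin (m+2) → ℝ) × ℝ | ∑ i, q.1 i ≤ 1}
                ∩ ({q : (Fin (m+2) → ℝ) × ℝ | ∑ i, q.1 i ≤ q.2}
                ∩ ⋂ i, {q : (Fin (m+2) → ℝ) × ℝ | q.2 ≤ 1 + q.1 i})) := by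
            ext q; simp [SxSet, Set.mem_iInter]
          rw [h1]
          have hs1 : Measurable fun q : (Fin (m+2) → ℝ) × ℝ => ∑ i, q.1 i :=
            (hsummeas _).comp measurable_fst
          exact (MeasurableSet.iInter fun i => measurableSet_le measurable_const
              ((measurable_pi_apply i).comp measurable_fst)).inter
            ((measurableSet_le hs1 measurable_const).inter
              ((measurableSet_le hs1 measurable_snd).inter
                (MeasurableSet.iInter fun i => measurableSet_le measurable_snd
                  (measurable_const.add ((measurable_pi_apply i).comp measurable_fst)))))
        have huncurry : (Function.uncurry fun (w : Fin (m+2) → ℝ) (x : ℝ) =>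
            (SxSet (m+2) x).indicator (fun _ => g x) w)
            = Set.indicator {q : (Fin (m+2) → ℝ) × ℝ | q.1 ∈ SxSet (m+2) q.2}
              (fun q => g q.2) := by
          funext q
          by_cases h : q.1 ∈ SxSet (m+2) q.2 <;>
            simp [Function.uncurry, Set.indicator_apply, h]
        rw [huncurry, integrable_indicator_iff hD]
        have hsub : {q : (Fin (m+2) → ℝ) × ℝ | q.1 ∈ SxSet (m+2) q.2}
            ⊆ (Set.Icc (0 : Fin (m+2) → ℝ) 1) ×ˢ (Set.Icc (0:ℝ) 2) := by
          rintro q ⟨h1, h2, h3, h4⟩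
          have hj : ∀ j, q.1 j ≤ ∑ i, q.1 i := fun j =>
            Finset.single_le_sum (fun i _ => h1 i) (Finset.mem_univ j)
          have hs0 : (0:ℝ) ≤ ∑ i, q.1 i := Finset.sum_nonneg fun i _ => h1 i
          constructor
          · rw [Set.mem_Icc]
            exact ⟨fun i => h1 i, fun i => le_trans (hj i) h2⟩
          · exact ⟨by linarith, by linarith [h4 0, hj 0, le_trans (hj 0) h2]⟩
        refine IntegrableOn.mono_set ?_ hsub
        refine ContinuousOn.integrableOn_compact (isCompact_Icc.prod isCompact_Icc) ?_
        exact (hg.comp continuous_snd).continuousOn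
    _ = ∫ x : ℝ, (volume (SxSet (m+2) x)).toReal * g x := by
        refine integral_congr_ae (Filter.Eventually.of_forall fun x => ?_)
        dsimp only
        rw [integral_indicator_const (g x) (SxSet_meas _ _), smul_eq_mul]
        exact rfl

noncomputable def psiQ (m : ℕ) (g : ℝ → ℝ) : ℝ × ℝ → ℝ :=
  fun q => g q.2 * ((q.1 - max 0 ((((m:ℝ)+2)) * (q.2 - 1)))^(m+1) / ((m:ℝ)+1))

def Qset (m : ℕ) : Set (ℝ × ℝ) :=
  {q | q.1 ∈ Set.Ioc (0:ℝ) 1 ∧ q.2 ∈ Set.Ioc q.1 (1 + q.1/((m:ℝ)+2))}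

lemma RHS_step1 (m : ℕ) (g : ℝ → ℝ) (hg : Continuous g) (t : ℝ) (ht : t ∈ Set.Ioc (0:ℝ) 1) :
    (∫ s in (0:ℝ)..t, ∫ x in t..(1 + s / ((m:ℝ)+2)), g x * (t - s) ^ m)
      = ∫ x : ℝ, (Qset m).indicator (psiQ m g) (t, x) := by
  set N : ℝ := (m:ℝ)+2 with hNdef
  have hN : (0:ℝ) < N := by positivity
  set A : Set (ℝ × ℝ) := {p | p.1 ∈ Set.Ioc (0:ℝ) t ∧ p.2 ∈ Set.Ioc t (1 + p.1/N)} with hA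
  set φ : ℝ × ℝ → ℝ := fun p => g p.2 * (t - p.1)^m with hφ
  have hAmeas : MeasurableSet A := by
    have h1 : A = ({p : ℝ × ℝ | 0 < p.1} ∩ {p : ℝ × ℝ | p.1 ≤ t})
        ∩ ({p : ℝ × ℝ | t < p.2} ∩ {p : ℝ × ℝ | p.2 ≤ 1 + p.1/N}) := by
      ext p; simp [hA, Set.mem_Ioc, and_assoc]
    rw [h1]
    exact ((measurableSet_lt measurable_const measurable_fst).inter
        (measurableSet_le measurable_fst measurable_const)).inter
      ((measurableSet_lt measurable_const measurable_snd).inter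
        (measurableSet_le measurable_snd
          (measurable_const.add (measurable_fst.div_const N))))
  have hAint : Integrable (A.indicator φ) (volume : Measure (ℝ × ℝ)) := by
    rw [integrable_indicator_iff hAmeas]
    have hsub : A ⊆ (Set.Icc (0:ℝ) t) ×ˢ (Set.Icc t (1 + t/N)) := by
      rintro p ⟨⟨hp1, hp2⟩, hp3, hp4⟩
      have hdiv : p.1/N ≤ t/N := by gcongr
      exact ⟨⟨hp1.le, hp2⟩, hp3.le, by linarith⟩
    refine IntegrableOn.mono_set ?_ hsub
    refine ContinuousOn.integrableOn_compact (isCompact_Icc.prod isCompact_Icc) ?_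
    exact ((hg.comp continuous_snd).mul
      ((continuous_const.sub continuous_fst).pow m)).continuousOn
  calc (∫ s in (0:ℝ)..t, ∫ x in t..(1 + s / N), g x * (t - s) ^ m)
      = ∫ s in Set.Ioc (0:ℝ) t, ∫ x in t..(1 + s / N), g x * (t - s) ^ m := by
        rw [intervalIntegral.integral_of_le ht.1.le]
    _ = ∫ s in Set.Ioc (0:ℝ) t, ∫ x : ℝ, A.indicator φ (s, x) := by
        refine setIntegral_congr_fun measurableSet_Ioc fun s hs => ?_
        have hts : t ≤ 1 + s/N := by
          have : 0 ≤ s/N := div_nonneg hs.1.le hN.le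
          linarith [ht.2]
        rw [intervalIntegral.integral_of_le hts, ← integral_indicator measurableSet_Ioc]
        congr 1
        funext x
        by_cases hx : x ∈ Set.Ioc t (1 + s/N)
        · rw [Set.indicator_of_mem hx, Set.indicator_of_mem (by exact ⟨hs, hx⟩)]
        · rw [Set.indicator_of_notMem hx, Set.indicator_of_notMem (by
            rintro ⟨_, hx2⟩; exact hx hx2)]
    _ = ∫ s : ℝ, ∫ x : ℝ, A.indicator φ (s, x) := by
        refine setIntegral_eq_integral_of_forall_compl_eq_zero fun s hs => ?_
        have : ∀ x, A.indicator φ (s, x) = 0 := fun x =>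
          Set.indicator_of_notMem (fun hmem => hs hmem.1) _
        simp [this]
    _ = ∫ x : ℝ, ∫ s : ℝ, A.indicator φ (s, x) := by
        refine integral_integral_swap ?_
        have : (Function.uncurry fun s x => A.indicator φ (s, x)) = A.indicator φ := by
          funext p; simp [Function.uncurry]
        rw [this]; exact hAint
    _ = ∫ x : ℝ, (Qset m).indicator (psiQ m g) (t, x) := by
        refine integral_congr_ae (Filter.Eventually.of_forall fun x => ?_)
        dsimp only
        by_cases hx : x ∈ Set.Ioc t (1 + t/N)
        · -- main case
          set l : ℝ := max 0 (N*(x-1)) with hl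
          have hxt : t < x := hx.1
          have hNx : N*(x-1) ≤ t := by
            have h1 : x - 1 ≤ t/N := by linarith [hx.2]
            calc N*(x-1) ≤ N*(t/N) := by gcongr
              _ = t := by field_simp
          have hlt : l ≤ t := max_le ht.1.le hNx
          have hfun : (fun s => A.indicator φ (s, x))
              = Set.indicator {s | s ∈ Set.Ioc 0 t ∧ N*(x-1) ≤ s}
                  (fun s => g x * (t - s)^m) := by
            funext s
            have hiff : ((s, x) ∈ A) ↔ (s ∈ {s : ℝ | s ∈ Set.Ioc 0 t ∧ N*(x-1) ≤ s}) := by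
              rw [Set.mem_setOf_eq]
              simp only [hA, Set.mem_setOf_eq, Set.mem_Ioc]
              constructor
              · rintro ⟨hs1, hs2, hs3⟩
                refine ⟨hs1, ?_⟩
                have : x - 1 ≤ s/N := by linarith
                calc N*(x-1) ≤ N*(s/N) := by gcongr
                  _ = s := by field_simp
              · rintro ⟨hs1, hs2⟩
                refine ⟨hs1, hxt, ?_⟩
                have : N*(x-1) / N ≤ s / N := by gcongr
                rw [mul_div_cancel_left₀ _ hN.ne'] at this
                linarith [(div_le_div_iff_of_pos_right hN).mpr hs2]
            rw [Set.indicator_apply, Set.indicator_apply, if_congr hiff rfl rfl]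
          have hSmeas : MeasurableSet {s : ℝ | s ∈ Set.Ioc 0 t ∧ N*(x-1) ≤ s} := by
            have : {s : ℝ | s ∈ Set.Ioc 0 t ∧ N*(x-1) ≤ s}
                = Set.Ioc 0 t ∩ Set.Ici (N*(x-1)) := by ext s; simp [Set.mem_Ici]
            rw [this]; exact measurableSet_Ioc.inter measurableSet_Ici
          have hae : {s : ℝ | s ∈ Set.Ioc 0 t ∧ N*(x-1) ≤ s} =ᵐ[volume] Set.Ioc l t := by
            refine ae_eq_Ioc_between ?_ ?_
            · intro s hs
              have h0 : 0 ≤ l := le_max_left _ _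
              have h1 : N*(x-1) ≤ l := le_max_right _ _
              exact ⟨⟨by linarith [hs.1], hs.2.le⟩, by linarith [hs.1]⟩
            · rintro s ⟨hs1, hs2⟩
              exact ⟨max_le hs1.1.le hs2, hs1.2⟩
          rw [hfun, integral_indicator hSmeas, setIntegral_congr_set hae,
            ← intervalIntegral.integral_of_le hlt, intervalIntegral.integral_const_mul,
            integral_tsub_pow m l t]
          have hQmem : (t, x) ∈ Qset m := ⟨ht, hx⟩
          rw [Set.indicator_of_mem hQmem]
          simp only [psiQ]
          rw [hl, hNdef]
        · -- outside
          have hzero : ∀ s, A.indicator φ (s, x) = 0 := by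
            intro s
            refine Set.indicator_of_notMem ?_ _
            rintro ⟨hs1, hs2⟩
            refine hx ⟨hs2.1, ?_⟩
            have : s/N ≤ t/N := by gcongr; exact hs1.2
            linarith [hs2.2]
          have hQ : (t, x) ∉ Qset m := by
            rintro ⟨_, hq2⟩; exact hx hq2
          rw [Set.indicator_of_notMem hQ]
          simp [hzero]

lemma RHS_red (m : ℕ) (g : ℝ → ℝ) (hg : Continuous g) :
    (∫ t in (0:ℝ)..1, ∫ s in (0:ℝ)..t, ∫ x in t..(1 + s / ((m:ℝ)+2)), g x * (t - s) ^ m)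
      = ∫ x : ℝ, g x * (max (min 1 x - max 0 (((m:ℝ)+2) * (x - 1))) 0) ^ (m+2)
          / (((m:ℝ)+1) * ((m:ℝ)+2)) := by
  set N : ℝ := (m:ℝ)+2 with hNdef
  have hN : (0:ℝ) < N := by positivity
  have hQmeas : MeasurableSet (Qset m) := by
    have h1 : Qset m = ({q : ℝ × ℝ | 0 < q.1} ∩ {q : ℝ × ℝ | q.1 ≤ 1})
        ∩ ({q : ℝ × ℝ | q.1 < q.2} ∩ {q : ℝ × ℝ | q.2 ≤ 1 + q.1/N}) := by
      ext q; simp [Qset, Set.mem_Ioc, and_assoc, hNdef]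
    rw [h1]
    exact ((measurableSet_lt measurable_const measurable_fst).inter
        (measurableSet_le measurable_fst measurable_const)).inter
      ((measurableSet_lt measurable_fst measurable_snd).inter
        (measurableSet_le measurable_snd
          (measurable_const.add (measurable_fst.div_const N))))
  have hψ : Continuous (psiQ m g) := by
    apply Continuous.mul (hg.comp continuous_snd)
    apply Continuous.div_const
    exact (continuous_fst.sub (continuous_const.max
      (continuous_const.mul (continuous_snd.sub continuous_const)))).pow _
  have hQint : Integrable ((Qset m).indicator (psiQ m g)) (volume : Measure (ℝ × ℝ)) := by
    rw [integrable_indicator_iff hQmeas]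
    have hsub : Qset m ⊆ (Set.Icc (0:ℝ) 1) ×ˢ (Set.Icc (0:ℝ) 2) := by
      rintro q ⟨hq1, hq2⟩
      refine ⟨⟨hq1.1.le, hq1.2⟩, ?_, ?_⟩
      · linarith [hq2.1, hq1.1]
      · have h1 : q.1/N ≤ 1 := by
          rw [div_le_one hN]; linarith [hq1.2, hNdef ▸ hN]
        linarith [hq2.2]
    exact (hψ.continuousOn.integrableOn_compact (isCompact_Icc.prod isCompact_Icc)).mono_set hsub
  calc (∫ t in (0:ℝ)..1, ∫ s in (0:ℝ)..t, ∫ x in t..(1 + s / N), g x * (t - s) ^ m)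
      = ∫ t in Set.Ioc (0:ℝ) 1, ∫ s in (0:ℝ)..t, ∫ x in t..(1 + s / N), g x * (t - s) ^ m := by
        rw [intervalIntegral.integral_of_le zero_le_one]
    _ = ∫ t in Set.Ioc (0:ℝ) 1, ∫ x : ℝ, (Qset m).indicator (psiQ m g) (t, x) := by
        exact setIntegral_congr_fun measurableSet_Ioc fun t ht => RHS_step1 m g hg t ht
    _ = ∫ t : ℝ, ∫ x : ℝ, (Qset m).indicator (psiQ m g) (t, x) := by
        refine setIntegral_eq_integral_of_forall_compl_eq_zero fun t ht => ?_
        have : ∀ x, (Qset m).indicator (psiQ m g) (t, x) = 0 := fun x =>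
          Set.indicator_of_notMem (fun hmem => ht hmem.1) _
        simp [this]
    _ = ∫ x : ℝ, ∫ t : ℝ, (Qset m).indicator (psiQ m g) (t, x) := by
        refine integral_integral_swap ?_
        have : (Function.uncurry fun t x => (Qset m).indicator (psiQ m g) (t, x))
            = (Qset m).indicator (psiQ m g) := by
          funext p; simp [Function.uncurry]
        rw [this]; exact hQint
    _ = ∫ x : ℝ, g x * (max (min 1 x - max 0 (N * (x - 1))) 0) ^ (m+2)
          / (((m:ℝ)+1) * ((m:ℝ)+2)) := by
        refine integral_congr_ae (Filter.Eventually.of_forall fun x => ?_)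
        dsimp only
        set l : ℝ := max 0 (N*(x-1)) with hl
        set u : ℝ := min 1 x with hu
        have hl0 : 0 ≤ l := le_max_left _ _
        have hlN : N*(x-1) ≤ l := le_max_right _ _
        have hdiv_iff : ∀ t : ℝ, (x ≤ 1 + t/N ↔ N*(x-1) ≤ t) := by
          intro t
          constructor
          · intro h
            have h1 : x - 1 ≤ t/N := by linarith
            calc N*(x-1) ≤ N*(t/N) := by gcongr
              _ = t := by field_simp
          · intro h
            have h1 : N*(x-1)/N ≤ t/N := by gcongr
            rw [mul_div_cancel_left₀ _ hN.ne'] at h1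
            linarith
        have hfun : (fun t => (Qset m).indicator (psiQ m g) (t, x))
            = Set.indicator {t : ℝ | t ∈ Set.Ioc (0:ℝ) 1 ∧ N*(x-1) ≤ t ∧ t < x}
                (fun t => psiQ m g (t, x)) := by
          funext t
          classical
          have hiff : ((t, x) ∈ Qset m)
              ↔ (t ∈ {t : ℝ | t ∈ Set.Ioc (0:ℝ) 1 ∧ N*(x-1) ≤ t ∧ t < x}) := by
            rw [Set.mem_setOf_eq]
            simp only [Qset, Set.mem_setOf_eq, Set.mem_Ioc]
            constructor
            · rintro ⟨h1, h2, h3⟩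
              exact ⟨h1, (hdiv_iff t).mp h3, h2⟩
            · rintro ⟨h1, h2, h3⟩
              exact ⟨h1, h3, (hdiv_iff t).mpr h2⟩
          rw [Set.indicator_apply, Set.indicator_apply, if_congr hiff rfl rfl]
        have hSmeas : MeasurableSet {t : ℝ | t ∈ Set.Ioc (0:ℝ) 1 ∧ N*(x-1) ≤ t ∧ t < x} := by
          have h1 : {t : ℝ | t ∈ Set.Ioc (0:ℝ) 1 ∧ N*(x-1) ≤ t ∧ t < x}
              = Set.Ioc (0:ℝ) 1 ∩ (Set.Ici (N*(x-1)) ∩ Set.Iio x) := by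
            ext t; simp [Set.mem_Ici, Set.mem_Iio, and_assoc]
          rw [h1]
          exact measurableSet_Ioc.inter (measurableSet_Ici.inter measurableSet_Iio)
        rw [hfun, integral_indicator hSmeas]
        rcases lt_or_ge l u with hlu | hlu
        · have hsub1 : Set.Ioo l u ⊆ {t : ℝ | t ∈ Set.Ioc (0:ℝ) 1 ∧ N*(x-1) ≤ t ∧ t < x} := by
            rintro t ⟨h1, h2⟩
            refine ⟨⟨by linarith, ?_⟩, by linarith, ?_⟩
            · have : u ≤ 1 := min_le_left _ _
              linarith
            · have : u ≤ x := min_le_right _ _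
              linarith
          have hsub2 : {t : ℝ | t ∈ Set.Ioc (0:ℝ) 1 ∧ N*(x-1) ≤ t ∧ t < x}
              ⊆ Set.Icc l u := by
            rintro t ⟨h1, h2, h3⟩
            exact ⟨max_le h1.1.le h2, le_min h1.2 h3.le⟩
          rw [setIntegral_congr_set (ae_eq_Ioc_between hsub1 hsub2),
            ← intervalIntegral.integral_of_le hlu.le]
          have hpsi : ∀ t : ℝ, psiQ m g (t, x) = (g x / ((m:ℝ)+1)) * (t - l)^(m+1) := by
            intro t
            simp only [psiQ, ← hNdef, ← hl]
            ring
          simp_rw [hpsi]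
          rw [intervalIntegral.integral_const_mul]
          have hcomp : (∫ t in l..u, (t - l)^(m+1)) = (u - l)^(m+2)/((m:ℝ)+2) := by
            have h := intervalIntegral.integral_comp_sub_right (fun y => y^(m+1)) l (a := l) (b := u)
            rw [h, sub_self, integral_pow]
            push_cast
            ring_nf
          rw [hcomp]
          have hmax : max (u - l) 0 = u - l := max_eq_left (by linarith)
          rw [hmax]
          have h1 : ((m:ℝ)+1) ≠ 0 := by positivity
          have h2 : ((m:ℝ)+2) ≠ 0 := by positivity
          field_simp
        · have hsub : {t : ℝ | t ∈ Set.Ioc (0:ℝ) 1 ∧ N*(x-1) ≤ t ∧ t < x} ⊆ {l} := by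
            rintro t ⟨h1, h2, h3⟩
            have hlt : l ≤ t := max_le h1.1.le h2
            have htu : t ≤ u := le_min h1.2 h3.le
            have : t = l := le_antisymm (by linarith) hlt
            simp [this]
          have hzero : volume {t : ℝ | t ∈ Set.Ioc (0:ℝ) 1 ∧ N*(x-1) ≤ t ∧ t < x} = 0 :=
            measure_mono_null hsub (measure_singleton l)
          rw [show (volume.restrict {t : ℝ | t ∈ Set.Ioc (0:ℝ) 1 ∧ N*(x-1) ≤ t ∧ t < x}) = 0
            from Measure.restrict_eq_zero.mpr hzero, integral_zero_measure]
          have hmax : max (u - l) 0 = 0 := max_eq_right (by linarith)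
          rw [hmax]
          simp


/-- For `k ≥ 3` and continuous `f`, with
`R'_k = {t ∈ [0,1]^k : Σ_{i≠j} t_i ≤ 1 for every j}`:
`∫_{R'_k} f(t₁+⋯+t_k)² dt = (1/(k-3)!) ∫₀¹ ∫₀ᵗ ∫_t^{1+s/(k-1)} f(x)² (t-s)^{k-3} dx ds dt`. -/
theorem stmt_13 (k : ℕ) (hk : 3 ≤ k) (f : ℝ → ℝ) (hf : Continuous f) :
    (∫ v in {v : Fin k → ℝ | (∀ i, v i ∈ Set.Icc (0 : ℝ) 1) ∧
        ∀ j, ∑ i ∈ Finset.univ.erase j, v i ≤ 1}, f (∑ i, v i) ^ 2)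
      = (1 / (Nat.factorial (k - 3) : ℝ)) *
        ∫ t in (0 : ℝ)..1, ∫ s in (0 : ℝ)..t, ∫ x in t..(1 + s / ((k : ℝ) - 1)),
          f x ^ 2 * (t - s) ^ (k - 3) := by
  obtain ⟨m, rfl⟩ : ∃ m, k = m + 3 := ⟨k - 3, by omega⟩
  set g : ℝ → ℝ := fun x => f x ^ 2 with hgdef
  have hg : Continuous g := hf.pow 2
  have hset : {v : Fin (m+3) → ℝ | (∀ i, v i ∈ Set.Icc (0:ℝ) 1) ∧
      ∀ j, ∑ i ∈ Finset.univ.erase j, v i ≤ 1}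
      = {v : Fin (m+3) → ℝ | (∀ i, 0 ≤ v i) ∧ ∀ j, (∑ i, v i) - v j ≤ 1} := by
    ext v
    simp only [Set.mem_setOf_eq, Set.mem_Icc]
    constructor
    · rintro ⟨h1, h2⟩
      refine ⟨fun i => (h1 i).1, fun j => ?_⟩
      rw [← Finset.sum_erase_eq_sub (Finset.mem_univ j)]
      exact h2 j
    · rintro ⟨h1, h2⟩
      constructor
      · intro i
        refine ⟨h1 i, ?_⟩
        obtain ⟨j, hj⟩ : ∃ j : Fin (m+3), j ≠ i := by
          rcases eq_or_ne i 0 with hi | hi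
          · exact ⟨1, by rw [hi]; exact (by norm_num : (1 : Fin (m+3)) ≠ 0)⟩
          · exact ⟨0, Ne.symm hi⟩
        have hij : i ∈ Finset.univ.erase j :=
          Finset.mem_erase.mpr ⟨(Ne.symm hj), Finset.mem_univ i⟩
        have h3 : v i ≤ ∑ i' ∈ Finset.univ.erase j, v i' :=
          Finset.single_le_sum (fun i' _ => h1 i') hij
        have h4 : ∑ i' ∈ Finset.univ.erase j, v i' = (∑ i', v i') - v j :=
          Finset.sum_erase_eq_sub (Finset.mem_univ j)
        linarith [h2 j]
      · intro j
        rw [Finset.sum_erase_eq_sub (Finset.mem_univ j)]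
        exact h2 j
  have hk3 : (m + 3) - 3 = m := by omega
  have hkc : ((m + 3 : ℕ) : ℝ) - 1 = (m:ℝ) + 2 := by push_cast; ring
  rw [hset, hk3, hkc, LHS_red m g hg, RHS_red m g hg, ← integral_const_mul]
  refine integral_congr_ae (Filter.Eventually.of_forall fun x => ?_)
  dsimp only
  have hpos : 0 < m + 2 := by omega
  rw [SxSet_vol (m+2) hpos x]
  have hcast : ((m + 2 : ℕ) : ℝ) = (m:ℝ) + 2 := by push_cast; ring
  rw [hcast]
  set M : ℝ := max (min 1 x - max 0 (((m:ℝ)+2) * (x - 1))) 0 with hM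
  have hM0 : 0 ≤ M := le_max_right _ _
  have hfac2 : ((m+2).factorial : ℝ) = ((m:ℝ)+2) * (((m:ℝ)+1) * (m.factorial : ℝ)) := by
    rw [show m + 2 = (m+1)+1 from rfl, Nat.factorial_succ, Nat.factorial_succ]
    push_cast
    ring
  rw [ENNReal.toReal_ofReal (by positivity)]
  rw [hfac2]
  have h1 : ((m:ℝ)+1) ≠ 0 := by positivity
  have h2 : ((m:ℝ)+2) ≠ 0 := by positivity
  have h3 : ((m.factorial : ℝ)) ≠ 0 := Nat.cast_ne_zero.mpr m.factorial_ne_zero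
  field_simp
end

section
/- For any positive integer δ and any prime p with p ∤ δ, and any arithmetic function λ supported on squarefree tuples, the identity Σ'_{d,e} λ_d λ_e · δ·p/lcm(d, e, δ·p) = Σ'_{d,e: p∤d, p∤e} (λ_d + λ_{pd})(λ_e + λ_{pe}) · δ/lcm(d,e,δ) holds, where Σ' restricts to squarefree d, e. In the one-variable special case δ = 1: Σ_{d,e squarefree} λ_d λ_e · p/lcm(d,e,p) = Σ_{d,e squarefree, p∤d,e} (λ_d + λ_{pd})(λ_e + λ_{pe})/lcm(d,e). -/
/-!
Every squarefree `n` is uniquely `d` or `p * d` with `p ∤ d`, so a sum over pairs of squarefree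
integers regroups into a sum over pairs `(d, e)` prime to `p` of four terms, one for each of
`(d, e), (p d, e), (d, p e), (p d, p e)`. Since `p ∤ d e`, all four have the same
`lcm(·, ·, δ p) = p · lcm(d, e, δ)`, and the four terms factor as
`(λ_d + λ_{pd}) (λ_e + λ_{pe}) δ / lcm(d, e, δ)`.
-/

open Function Set

theorem Nat.Coprime.lcm_mul_left_right {k m : ℕ} (n : ℕ) (h : Nat.Coprime k m) :
    Nat.lcm m (k * n) = k * Nat.lcm m n := by
  rw [Nat.lcm, Nat.lcm, h.gcd_mul_left_cancel_right, mul_left_comm,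
    Nat.mul_div_assoc _ ((Nat.gcd_dvd_left m n).trans (Nat.dvd_mul_right m n))]

theorem Nat.lcm_lcm_mul_right_eq_of_not_dvd {p d e δ a b : ℕ} (hp : p.Prime) (hd : ¬ p ∣ d)
    (he : ¬ p ∣ e) (ha : a = d ∨ a = p * d) (hb : b = e ∨ b = p * e) :
    Nat.lcm (Nat.lcm a b) (δ * p) = p * Nat.lcm (Nat.lcm d e) δ := by
  have cd : Nat.Coprime p d := hp.coprime_iff_not_dvd.2 hd
  have ce : Nat.Coprime p e := hp.coprime_iff_not_dvd.2 he
  have cde : Nat.Coprime p (Nat.lcm d e) := hp.coprime_iff_not_dvd.2 (hp.not_dvd_lcm hd he)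
  have hlcm : Nat.lcm a b = Nat.lcm d e ∨ Nat.lcm a b = p * Nat.lcm d e := by
    rcases ha with rfl | rfl <;> rcases hb with rfl | rfl
    · exact .inl rfl
    · exact .inr (cd.lcm_mul_left_right e)
    · exact .inr (by rw [Nat.lcm_comm, ce.lcm_mul_left_right, Nat.lcm_comm])
    · exact .inr (Nat.lcm_mul_left p d e)
  rw [mul_comm δ p]
  rcases hlcm with h | h <;> rw [h]
  · exact cde.lcm_mul_left_right δ
  · exact Nat.lcm_mul_left p _ δ

theorem Nat.squarefree_subset_not_dvd_union_image_mul {p : ℕ} (hp : p.Prime) :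
    {n : ℕ | Squarefree n} ⊆ {m | ¬ p ∣ m} ∪ (p * ·) '' {m | ¬ p ∣ m} := by
  intro n hn
  by_cases h : p ∣ n
  · obtain ⟨m, rfl⟩ := h
    exact .inr ⟨m, fun hm => hp.not_isUnit (hn p (mul_dvd_mul_left p hm)), rfl⟩
  · exact .inl h

theorem Nat.disjoint_not_dvd_image_mul (p : ℕ) :
    Disjoint {m | ¬ p ∣ m} ((p * ·) '' {m | ¬ p ∣ m}) := by
  rw [Set.disjoint_left]
  rintro _ h ⟨m, -, rfl⟩
  exact h (dvd_mul_right p m)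

section Regroup

variable {α β : Type*} [AddCommMonoid α] [TopologicalSpace α] [ContinuousAdd α] [T2Space α]

theorem tsum_eq_tsum_indicator_add_comp {f : β → α} {g : β → β} {s : Set β}
    (hg : Injective g) (hs : Disjoint s (g '' s)) (hfs : support f ⊆ s ∪ g '' s)
    (hf : (support f).Finite) :
    ∑' x, f x = ∑' x, s.indicator (fun x => f x + f (g x)) x := by
  have hsum : ∀ {h : β → α} (t : Set β), (support h).Finite → Summable (t.indicator h) :=
    fun t hh => summable_of_hasFiniteSupport (hh.subset (by simp))
  have hsumg : (support (f ∘ g)).Finite := hf.preimage hg.injOn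
  have himage : ∑' x, (g '' s).indicator f x = ∑' x, s.indicator (f ∘ g) x := by
    rw [← hg.tsum_eq ((support_indicator_subset).trans (image_subset_range _ _))]
    simp only [indicator_image hg]
  calc ∑' x, f x = ∑' x, (s.indicator f x + (g '' s).indicator f x) := by
        rw [← indicator_union_of_disjoint hs, indicator_eq_self.2 hfs]
    _ = ∑' x, s.indicator f x + ∑' x, s.indicator (f ∘ g) x := by
        rw [(hsum s hf).tsum_add (hsum _ hf), himage]
    _ = ∑' x, s.indicator (fun x => f x + f (g x)) x := by
        rw [← (hsum s hf).tsum_add (hsum s hsumg)]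
        exact tsum_congr fun x => (congrFun (indicator_add s f (f ∘ g)) x).symm

theorem tsum_prod_squarefree_eq_tsum_not_dvd {p : ℕ} (hp : p.Prime) {F : ℕ × ℕ → α}
    (hF : (support F).Finite)
    (hFsq : support F ⊆ {n : ℕ | Squarefree n} ×ˢ {n : ℕ | Squarefree n}) :
    ∑' x, F x = ∑' x : ℕ × ℕ, if ¬ p ∣ x.1 ∧ ¬ p ∣ x.2 then
      F x + F (p * x.1, x.2) + F (x.1, p * x.2) + F (p * x.1, p * x.2) else 0 := by
  set A : Set ℕ := {m | ¬ p ∣ m}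
  have hinj : Injective (p * ·) := mul_right_injective₀ hp.ne_zero
  set G : ℕ × ℕ → α := (A ×ˢ univ).indicator (fun x => F x + F (p * x.1, x.2))
  have hGsupp : support G ⊆ support F ∪ Prod.map (p * ·) id ⁻¹' support F := by
    rw [support_indicator]
    exact inter_subset_right.trans (support_add F (F ∘ Prod.map (p * ·) id))
  have hGsq : support G ⊆ univ ×ˢ {n : ℕ | Squarefree n} := fun x hx =>
    (hGsupp hx).elim (fun h => ⟨trivial, (hFsq h).2⟩) (fun h => ⟨trivial, (hFsq h).2⟩)
  have hsplit := Nat.squarefree_subset_not_dvd_union_image_mul hp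
  have hdisj := Nat.disjoint_not_dvd_image_mul p
  rw [tsum_eq_tsum_indicator_add_comp (g := Prod.map (p * ·) id) (s := A ×ˢ univ)
    (hinj.prodMap injective_id) ?_ ?_ hF]
  rw [tsum_eq_tsum_indicator_add_comp (g := Prod.map id (p * ·)) (s := univ ×ˢ A)
    (injective_id.prodMap hinj) ?_ ?_ ?_]
  · refine tsum_congr fun ⟨d, e⟩ => ?_
    by_cases hd : p ∣ d <;> by_cases he : p ∣ e <;>
      simp [A, indicator_apply, hd, he, add_assoc]
  · rw [prodMap_image_prod, image_id, disjoint_prod]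
    exact .inr hdisj
  · rw [prodMap_image_prod, image_id, ← prod_union]
    exact hGsq.trans (prod_mono subset_rfl hsplit)
  · exact (hF.union (hF.preimage (hinj.prodMap injective_id).injOn)).subset hGsupp
  · rw [prodMap_image_prod, image_id, disjoint_prod]
    exact .inl hdisj
  · rw [prodMap_image_prod, image_id, ← union_prod]
    exact hFsq.trans (prod_mono hsplit (subset_univ _))

end Regroup

theorem sum_lcm_weight_eq_of_not_dvd {p d e δ : ℕ} (hp : p.Prime) (hδ : δ ≠ 0) (hd : ¬ p ∣ d)
    (he : ¬ p ∣ e) (lam : ℕ → ℝ) :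
    let w : ℕ → ℕ → ℝ := fun a b =>
      lam a * lam b * ((δ * p : ℕ) : ℝ) / (Nat.lcm (Nat.lcm a b) (δ * p) : ℝ)
    w d e + w (p * d) e + w d (p * e) + w (p * d) (p * e)
      = (lam d + lam (p * d)) * (lam e + lam (p * e)) * (δ : ℝ)
          / (Nat.lcm (Nat.lcm d e) δ : ℝ) := by
  have hL : (Nat.lcm (Nat.lcm d e) δ : ℝ) ≠ 0 := by
    have hd0 : d ≠ 0 := by rintro rfl; exact hd (dvd_zero p)
    have he0 : e ≠ 0 := by rintro rfl; exact he (dvd_zero p)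
    exact_mod_cast Nat.lcm_ne_zero (Nat.lcm_ne_zero hd0 he0) hδ
  simp only [Nat.lcm_lcm_mul_right_eq_of_not_dvd hp hd he (.inl rfl) (.inl rfl),
    Nat.lcm_lcm_mul_right_eq_of_not_dvd hp hd he (.inl rfl) (.inr rfl),
    Nat.lcm_lcm_mul_right_eq_of_not_dvd hp hd he (.inr rfl) (.inl rfl),
    Nat.lcm_lcm_mul_right_eq_of_not_dvd hp hd he (.inr rfl) (.inr rfl)]
  have hp0 : (p : ℝ) ≠ 0 := by exact_mod_cast hp.ne_zero
  push_cast
  field_simp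
  ring

theorem stmt_16_general (δ p : ℕ) (hδ : 0 < δ) (hp : p.Prime)
    (lam : ℕ → ℝ) (hfin : (Function.support lam).Finite)
    (hsupp : ∀ n, lam n ≠ 0 → Squarefree n) :
    (∑' de : ℕ × ℕ, if Squarefree de.1 ∧ Squarefree de.2 then
        lam de.1 * lam de.2 * ((δ * p : ℕ) : ℝ)
          / (Nat.lcm (Nat.lcm de.1 de.2) (δ * p) : ℝ)
      else 0)
    = ∑' de : ℕ × ℕ,
        if Squarefree de.1 ∧ Squarefree de.2 ∧ ¬ p ∣ de.1 ∧ ¬ p ∣ de.2 then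
          (lam de.1 + lam (p * de.1)) * (lam de.2 + lam (p * de.2)) * (δ : ℝ)
            / (Nat.lcm (Nat.lcm de.1 de.2) δ : ℝ)
        else 0 := by
  have hzero : ∀ n, ¬ Squarefree n → lam n = 0 := fun n => not_imp_comm.1 (hsupp n)
  have hzero_mul : ∀ n, ¬ Squarefree n → lam (p * n) = 0 := fun n hn =>
    hzero _ fun h => hn h.of_mul_right
  set F : ℕ × ℕ → ℝ := fun x =>
    lam x.1 * lam x.2 * ((δ * p : ℕ) : ℝ) / (Nat.lcm (Nat.lcm x.1 x.2) (δ * p) : ℝ)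
  have hF : support F ⊆ support lam ×ˢ support lam := fun x hx => by
    simp only [mem_support, F, div_ne_zero_iff, mul_ne_zero_iff] at hx
    exact ⟨hx.1.1.1, hx.1.1.2⟩
  calc _ = ∑' x, F x := tsum_congr fun x => by
        by_cases h1 : Squarefree x.1 <;> by_cases h2 : Squarefree x.2 <;> simp [F, h1, h2, hzero]
    _ = _ := tsum_prod_squarefree_eq_tsum_not_dvd hp ((hfin.prod hfin).subset hF)
        (hF.trans (prod_mono hsupp hsupp))
    _ = _ := tsum_congr fun ⟨d, e⟩ => by
        by_cases hd : p ∣ d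
        · simp [hd]
        by_cases he : p ∣ e
        · simp [he]
        rw [if_pos ⟨hd, he⟩, sum_lcm_weight_eq_of_not_dvd hp hδ.ne' hd he]
        by_cases h1 : Squarefree d <;> by_cases h2 : Squarefree e <;>
          simp [h1, h2, hd, he, hzero, hzero_mul]

/-- For a positive integer `δ`, a prime `p ∤ δ`, and `λ` finitely supported on
squarefree integers:
`Σ_{d,e squarefree} λ_d λ_e · δp/lcm(d,e,δp)
  = Σ_{d,e squarefree, p∤d, p∤e} (λ_d + λ_{pd})(λ_e + λ_{pe}) · δ/lcm(d,e,δ)`. -/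
theorem stmt_16 (δ p : ℕ) (hδ : 0 < δ) (hp : p.Prime) (hpδ : ¬ p ∣ δ)
    (lam : ℕ → ℝ) (hfin : (Function.support lam).Finite)
    (hsupp : ∀ n, lam n ≠ 0 → Squarefree n) :
    (∑' de : ℕ × ℕ, if Squarefree de.1 ∧ Squarefree de.2 then
        lam de.1 * lam de.2 * ((δ * p : ℕ) : ℝ)
          / (Nat.lcm (Nat.lcm de.1 de.2) (δ * p) : ℝ)
      else 0)
    = ∑' de : ℕ × ℕ,
        if Squarefree de.1 ∧ Squarefree de.2 ∧ ¬ p ∣ de.1 ∧ ¬ p ∣ de.2 then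
          (lam de.1 + lam (p * de.1)) * (lam de.2 + lam (p * de.2)) * (δ : ℝ)
            / (Nat.lcm (Nat.lcm de.1 de.2) δ : ℝ)
        else 0 :=
  stmt_16_general δ p hδ hp lam hfin hsupp
end
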